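/- arXiv:1404.1594 — 6 statements merged into one kernel-verified Lean document; each statement's English description precedes it below -/
import Mathlib

section
/- For every natural number n, (1/√π) ∫_0^1 t^n (-ln t)^{-1/2} dt = 1/√(n+1). Consequently, the measure (1/√π)(-ln t)^{-1/2} dt on (0,1) is a probability measure whose n-th moment squared equals the n-th moment of Lebesgue measure on [0,1]. -/
/-! Substituting `t = exp (-x)` turns `∫₀¹ tᵃ (-log t)^(s-1) dt` into the Gamma integral
`∫₀^∞ x^(s-1) e^{-(a+1)x} dx = Γ(s) / (a+1)^s`; at `a = n`, `s = 1/2` this is `√π / √(n+1)`. -/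

open MeasureTheory Set Real

theorem image_exp_neg_Ioi_zero : (fun x : ℝ ↦ exp (-x)) '' Ioi 0 = Ioo 0 1 := by
  ext t
  constructor
  · rintro ⟨x, hx, rfl⟩
    exact ⟨exp_pos _, exp_lt_one_iff.mpr (neg_lt_zero.mpr hx)⟩
  · rintro ⟨h0, h1⟩
    exact ⟨-log t, neg_pos.mpr (log_neg h0 h1), by simp [exp_log h0]⟩

theorem integral_comp_exp_neg_Ioi_zero {E : Type*} [NormedAddCommGroup E] [NormedSpace ℝ E]
    (g : ℝ → E) : ∫ x in Ioi 0, exp (-x) • g (exp (-x)) = ∫ t in Ioo 0 1, g t := by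
  symm; rw [← image_exp_neg_Ioi_zero]
  simpa [abs_of_pos (exp_pos _)] using integral_image_eq_integral_abs_deriv_smul
    measurableSet_Ioi (fun x _ ↦ (hasDerivAt_neg x).exp.hasDerivWithinAt)
    (fun x _ y _ hxy ↦ neg_injective (exp_injective hxy)) g

theorem integral_Ioo_rpow_mul_neg_log_rpow {a s : ℝ} (ha : -1 < a) (hs : 0 < s) :
    ∫ t in Ioo 0 1, t ^ a * (-log t) ^ (s - 1) = Gamma s / (a + 1) ^ s := by
  have hgamma := integral_rpow_mul_exp_neg_mul_Ioi hs (r := a + 1) (by linarith)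
  rw [one_div, inv_rpow (by linarith), inv_mul_eq_div] at hgamma
  rw [← hgamma, ← integral_comp_exp_neg_Ioi_zero]
  refine setIntegral_congr_fun measurableSet_Ioi fun x _ ↦ ?_
  rw [smul_eq_mul, log_exp, neg_neg, ← exp_mul, ← mul_assoc, ← exp_add, mul_comm]
  ring_nf

/-- The square root measure of Lebesgue measure on `[0,1]` is
`(1/√π)(-ln t)^{-1/2} dt` : its `n`-th moment is `1/√(n+1)`. -/
theorem sqrt_of_lebesgue_moments (n : ℕ) :
    (1 / Real.sqrt π) * ∫ t in Ioo (0:ℝ) 1, t ^ n * (-Real.log t) ^ (-(1/2) : ℝ) =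
      1 / Real.sqrt ((n : ℝ) + 1) := by
  have hmoment := integral_Ioo_rpow_mul_neg_log_rpow (a := n) (s := 1 / 2)
    (by linarith [n.cast_nonneg (α := ℝ)]) one_half_pos
  simp only [rpow_natCast, Gamma_one_half_eq, ← sqrt_eq_rpow] at hmoment
  rw [show (-(1 / 2) : ℝ) = 1 / 2 - 1 by norm_num, hmoment]
  field_simp
end

section
/- Let μ and ν be finite measures on ℝ with compact support contained in [0,∞) such that ∫ t^n dμ(t) = (∫ t^n dν(t))^2 for all natural numbers n. Then μ equals the pushforward of the product measure ν × ν under the multiplication map p(x,y) = x·y. -/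
/-!
The moments of the pushforward factor: `∫ (xy)^n d(ν × ν) = (∫ t^n dν)^2`, so `μ` and the
pushforward have the same moments, and both are concentrated on the compact set `K ∪ K * K`.
By Weierstrass approximation, a finite measure concentrated on a compact subset of `ℝ` is
determined by its moments.
-/

open MeasureTheory Set Filter
open scoped Pointwise

lemma Continuous.integrable_of_ae_mem_isCompact {X E : Type*} [TopologicalSpace X] [T2Space X]
    [MeasurableSpace X] [OpensMeasurableSpace X] [NormedAddCommGroup E] {μ : Measure X}
    [IsFiniteMeasureOnCompacts μ] {S : Set X} (hS : IsCompact S) (hμS : ∀ᵐ x ∂μ, x ∈ S)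
    {f : X → E} (hf : Continuous f) :
    Integrable f μ := by
  rw [← Measure.restrict_eq_self_of_ae_mem hμS]
  exact hf.continuousOn.integrableOn_compact hS

lemma abs_integral_sub_integral_le {α : Type*} [MeasurableSpace α] {μ : Measure α}
    [IsFiniteMeasure μ] {f g : α → ℝ} (hf : Integrable f μ) (hg : Integrable g μ) {ε : ℝ}
    (hfg : ∀ᵐ x ∂μ, |f x - g x| ≤ ε) :
    |∫ x, f x ∂μ - ∫ x, g x ∂μ| ≤ ε * μ.real univ := by
  rw [← integral_sub hf hg, ← Real.norm_eq_abs]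
  exact norm_integral_le_of_norm_le_const (by simpa only [Real.norm_eq_abs] using hfg)

lemma integral_eval_eq_of_integral_pow_eq {μ π : Measure ℝ}
    (hμ : ∀ n : ℕ, Integrable (fun x => x ^ n) μ) (hπ : ∀ n : ℕ, Integrable (fun x => x ^ n) π)
    (h : ∀ n : ℕ, ∫ x, x ^ n ∂μ = ∫ x, x ^ n ∂π) (q : Polynomial ℝ) :
    ∫ x, q.eval x ∂μ = ∫ x, q.eval x ∂π := by
  simp only [Polynomial.eval_eq_sum_range]
  rw [integral_finsetSum _ fun i _ => (hμ i).const_mul _,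
    integral_finsetSum _ fun i _ => (hπ i).const_mul _]
  simp only [integral_const_mul, h]

theorem MeasureTheory.Measure.ext_of_integral_pow_eq {μ π : Measure ℝ} [IsFiniteMeasure μ]
    [IsFiniteMeasure π] {S : Set ℝ} (hS : IsCompact S) (hμS : ∀ᵐ x ∂μ, x ∈ S)
    (hπS : ∀ᵐ x ∂π, x ∈ S) (h : ∀ n : ℕ, ∫ x, x ^ n ∂μ = ∫ x, x ^ n ∂π) : μ = π := by
  have hpoly := integral_eval_eq_of_integral_pow_eq
    (fun n => (continuous_pow n).integrable_of_ae_mem_isCompact hS hμS)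
    (fun n => (continuous_pow n).integrable_of_ae_mem_isCompact hS hπS) h
  have hSIcc := hS.isBounded.subset_Icc_sInf_sSup
  refine ext_of_forall_integral_eq_of_IsFiniteMeasure fun f => eq_of_forall_dist_le fun ε hε => ?_
  set C := μ.real univ + π.real univ
  have hC : 0 ≤ C := by positivity
  obtain ⟨q, hq⟩ := exists_polynomial_near_of_continuousOn _ _ f f.continuous.continuousOn
    (ε / (C + 1)) (by positivity)
  have hfq : ∀ x ∈ S, |f x - q.eval x| ≤ ε / (C + 1) := fun x hx =>
    (abs_sub_comm (q.eval x) (f x) ▸ hq x (hSIcc hx)).le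
  have hμq := abs_integral_sub_integral_le (f.integrable μ)
    (q.continuous.integrable_of_ae_mem_isCompact hS hμS) (hμS.mono hfq)
  have hπq := abs_integral_sub_integral_le (f.integrable π)
    (q.continuous.integrable_of_ae_mem_isCompact hS hπS) (hπS.mono hfq)
  calc dist (∫ x, f x ∂μ) (∫ x, f x ∂π)
      = |(∫ x, f x ∂μ - ∫ x, q.eval x ∂μ) - (∫ x, f x ∂π - ∫ x, q.eval x ∂π)| := by
        rw [Real.dist_eq, hpoly q, sub_sub_sub_cancel_right]
    _ ≤ ε / (C + 1) * μ.real univ + ε / (C + 1) * π.real univ :=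
        (abs_sub _ _).trans (add_le_add hμq hπq)
    _ = ε * (C / (C + 1)) := by ring
    _ ≤ ε := mul_le_of_le_one_right hε.le ((div_le_one (by positivity)).2 (by linarith))

lemma ae_mem_mul_map_mul_prod {M : Type*} [Mul M] [MeasurableSpace M] [MeasurableMul₂ M]
    {ν ρ : Measure M} {K L : Set M} (hνK : ∀ᵐ x ∂ν, x ∈ K) (hρL : ∀ᵐ y ∂ρ, y ∈ L)
    (hKL : MeasurableSet (K * L)) :
    ∀ᵐ t ∂(ν.prod ρ).map (fun p : M × M => p.1 * p.2), t ∈ K * L := by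
  rw [ae_map_iff (p := (· ∈ K * L)) measurable_mul.aemeasurable hKL]
  filter_upwards [Measure.quasiMeasurePreserving_fst.ae hνK,
    Measure.quasiMeasurePreserving_snd.ae hρL] with p hp₁ hp₂
  exact mul_mem_mul hp₁ hp₂

lemma integral_pow_map_mul_prod (ν ρ : Measure ℝ) [SFinite ν] [SFinite ρ] (n : ℕ) :
    ∫ t, t ^ n ∂(ν.prod ρ).map (fun p : ℝ × ℝ => p.1 * p.2) =
      (∫ t, t ^ n ∂ν) * ∫ t, t ^ n ∂ρ := by
  rw [integral_map measurable_mul.aemeasurable (continuous_pow n).aestronglyMeasurable]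
  simp only [mul_pow]
  exact integral_prod_mul _ _

theorem square_measure_eq_pushforward_of_product_general
    (μ ν : Measure ℝ) [IsFiniteMeasure μ] [IsFiniteMeasure ν]
    (K : Set ℝ) (hK : IsCompact K)
    (hμK : μ Kᶜ = 0) (hνK : ν Kᶜ = 0)
    (h : ∀ n : ℕ, (∫ t, t ^ n ∂μ) = (∫ t, t ^ n ∂ν) ^ 2) :
    μ = Measure.map (fun p : ℝ × ℝ => p.1 * p.2) (ν.prod ν) := by
  have hμK' : ∀ᵐ x ∂μ, x ∈ K := hμK
  have hπK : ∀ᵐ t ∂(ν.prod ν).map (fun p : ℝ × ℝ => p.1 * p.2), t ∈ K * K :=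
    ae_mem_mul_map_mul_prod hνK hνK (hK.mul hK).isClosed.measurableSet
  refine Measure.ext_of_integral_pow_eq (hK.union (hK.mul hK)) (hμK'.mono fun _ => Or.inl)
    (hπK.mono fun _ => Or.inr) fun n => ?_
  rw [h n, integral_pow_map_mul_prod, sq]

/-- If `μ` and `ν` are finite, compactly supported measures on `[0,∞)` whose moments
satisfy `∫ t^n dμ = (∫ t^n dν)^2` for all `n`, then `μ` is the pushforward of `ν × ν`
under the multiplication map `p(x,y) = x·y`. -/
theorem square_measure_eq_pushforward_of_product
    (μ ν : Measure ℝ) [IsFiniteMeasure μ] [IsFiniteMeasure ν]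
    (K : Set ℝ) (hK : IsCompact K) (hKpos : K ⊆ Ici (0:ℝ))
    (hμK : μ Kᶜ = 0) (hνK : ν Kᶜ = 0)
    (h : ∀ n : ℕ, (∫ t, t ^ n ∂μ) = (∫ t, t ^ n ∂ν) ^ 2) :
    μ = Measure.map (fun p : ℝ × ℝ => p.1 * p.2) (ν.prod ν) :=
  square_measure_eq_pushforward_of_product_general μ ν K hK hμK hνK h
end

section
/- Let μ = ρ_0 δ_{x_0} + ρ_1 δ_{x_1} be a probability measure on [0,1] with 0 < x_0 < x_1, ρ_0, ρ_1 > 0. Then there exists no measure ν on [0,∞) such that ∫ t^n dμ = (∫ t^n dν)^2 for all natural numbers n. -/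
open MeasureTheory Set ENNReal

/-!
If `ν` were a square root, its even moments would be
`c k = √(a x₀^(2k) + b x₁^(2k)) = √b x₁^k √(1 + (a/b) Q^k)` with `Q = (x₀/x₁)²`. Expanding the
square root, `c` looks like the moment sequence of a signed measure with atoms at `t² = x₁ Q^j`
and weights `√b (1/2 choose j) (a/b)^j`, the weight of the atom `j = 2` being negative. Testing
against the square `t^(2n) ((t²/x₁ - 1)(t²/x₁ - Q))²` kills the atoms `j = 0, 1`, so for large
`n` the negative atom dominates, contradicting `∫ (…)² dν ≥ 0`. Third-order Taylor bounds on
`√(1 + y)` make this quantitative.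
-/

lemma integral_smul_dirac_add_smul_dirac {α E : Type*} [MeasurableSpace α]
    [MeasurableSingletonClass α] [NormedAddCommGroup E] [NormedSpace ℝ E] [CompleteSpace E]
    {ρ₀ ρ₁ : ℝ≥0∞} (hρ₀ : ρ₀ ≠ ∞) (hρ₁ : ρ₁ ≠ ∞) (f : α → E) (x₀ x₁ : α) :
    ∫ t, f t ∂(ρ₀ • Measure.dirac x₀ + ρ₁ • Measure.dirac x₁)
      = ρ₀.toReal • f x₀ + ρ₁.toReal • f x₁ := by
  rw [integral_add_measure
      ((integrable_dirac enorm_lt_top).smul_measure hρ₀)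
      ((integrable_dirac enorm_lt_top).smul_measure hρ₁),
    integral_smul_measure, integral_smul_measure, integral_dirac, integral_dirac]

lemma sqrt_one_add_le {y : ℝ} (hy : 0 ≤ y) :
    √(1 + y) ≤ 1 + y / 2 - y ^ 2 / 8 + y ^ 3 / 16 := by
  refine Real.sqrt_le_iff.2 ⟨by nlinarith [sq_nonneg (y - 1), pow_nonneg hy 3], ?_⟩
  nlinarith [sq_nonneg y, pow_nonneg hy 3, pow_nonneg hy 4, pow_nonneg hy 5,
    pow_nonneg hy 6, sq_nonneg (y ^ 2 - y)]

lemma le_sqrt_one_add {y : ℝ} (hy : 0 ≤ y) (hy1 : y ≤ 1) :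
    1 + y / 2 - y ^ 2 / 8 ≤ √(1 + y) :=
  Real.le_sqrt_of_sq_le (by nlinarith [pow_nonneg hy 3, pow_nonneg hy 4])

def certCoeff (Q : ℝ) : Fin 5 → ℝ :=
  ![Q ^ 2, -(2 * Q * (1 + Q)), 1 + 4 * Q + Q ^ 2, -(2 * (1 + Q)), 1]

lemma sum_certCoeff_mul_pow (Q s : ℝ) :
    ∑ j, certCoeff Q j * s ^ (j : ℕ) = ((s - 1) * (s - Q)) ^ 2 := by
  simp only [certCoeff, Fin.sum_univ_five, Fin.isValue, Matrix.cons_val_zero,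
    Matrix.cons_val_one, Matrix.cons_val, Fin.coe_ofNat_eq_mod, Nat.reduceMod]
  ring

lemma sum_certCoeff_mul_sqrt_neg {Q x : ℝ} (hQ0 : 0 < Q) (hQ1 : Q < 1) (hx0 : 0 < x)
    (hx : x < ((Q ^ 2 - 1) * (Q ^ 2 - Q)) ^ 2 / 8) :
    ∑ j, certCoeff Q j * √(1 + x * Q ^ (j : ℕ)) < 0 := by
  have hy : ∀ j : ℕ, 0 ≤ x * Q ^ j := fun j => by positivity
  have hy1 : ∀ j : ℕ, x * Q ^ j ≤ 1 := fun j => by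
    have : ((Q ^ 2 - 1) * (Q ^ 2 - Q)) ^ 2 < 1 := by
      have hQQ : 0 < Q - Q ^ 2 := by nlinarith
      have hQ2 : 0 < 1 - Q ^ 2 := by nlinarith
      apply pow_lt_one₀ (by nlinarith) _ two_ne_zero
      nlinarith
    nlinarith [pow_le_one₀ hQ0.le hQ1.le (n := j), pow_nonneg hQ0.le j]
  -- bound each root from the side that the sign of its coefficient requires
  have h0 := mul_le_mul_of_nonneg_left (sqrt_one_add_le (hy 0)) (sq_nonneg Q)
  have h1 := mul_le_mul_of_nonpos_left (le_sqrt_one_add (hy 1) (hy1 1))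
    (show -(2 * Q * (1 + Q)) ≤ 0 by nlinarith)
  have h2 := mul_le_mul_of_nonneg_left (sqrt_one_add_le (hy 2))
    (show 0 ≤ 1 + 4 * Q + Q ^ 2 by positivity)
  have h3 := mul_le_mul_of_nonpos_left (le_sqrt_one_add (hy 3) (hy1 3))
    (show -(2 * (1 + Q)) ≤ 0 by linarith)
  have h4 := sqrt_one_add_le (hy 4)
  have hcubic : Q ^ 2 + (1 + 4 * Q + Q ^ 2) * Q ^ 6 + Q ^ 12 < 8 := by
    have := pow_le_one₀ hQ0.le hQ1.le (n := 6)
    nlinarith [pow_lt_one₀ hQ0.le hQ1 (n := 12) (by norm_num), pow_pos hQ0 6]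
  have htaylor : ∑ j, certCoeff Q j * √(1 + x * Q ^ (j : ℕ))
      ≤ -(x ^ 2 / 8) * ((Q ^ 2 - 1) * (Q ^ 2 - Q)) ^ 2
        + x ^ 3 / 16 * (Q ^ 2 + (1 + 4 * Q + Q ^ 2) * Q ^ 6 + Q ^ 12) := by
    simp only [certCoeff, Fin.sum_univ_five, Fin.isValue, Matrix.cons_val_zero,
      Matrix.cons_val_one, Matrix.cons_val, Fin.coe_ofNat_eq_mod, Nat.reduceMod] at h0 h1 ⊢
    simp only [pow_zero, mul_one, pow_one] at h0 h1 ⊢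
    linear_combination h0 + h1 + h2 + h3 + h4
  nlinarith [mul_lt_mul_of_pos_left hcubic (show 0 < x ^ 3 / 16 by positivity),
    mul_pos hx0 hx0, mul_pos (mul_pos hx0 hx0) hx0]

lemma sum_certCoeff_mul_integral_nonneg (ν : Measure ℝ)
    (hint : ∀ k : ℕ, Integrable (fun t : ℝ => t ^ (2 * k)) ν) (Q r : ℝ) (n : ℕ) :
    0 ≤ ∑ j, certCoeff Q j * ((∫ t, t ^ (2 * (n + j)) ∂ν) / r ^ (j : ℕ)) := by
  have hsq : ∀ t : ℝ, ∑ j, certCoeff Q j * (t ^ (2 * (n + j)) / r ^ (j : ℕ))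
      = (t ^ n * ((t ^ 2 / r - 1) * (t ^ 2 / r - Q))) ^ 2 := fun t => by
    rw [mul_pow, ← sum_certCoeff_mul_pow, Finset.mul_sum]
    congr 1 with j
    rw [div_pow, ← pow_mul, mul_add, pow_add]
    ring
  calc 0 ≤ ∫ t, ∑ j, certCoeff Q j * (t ^ (2 * (n + j)) / r ^ (j : ℕ)) ∂ν :=
        integral_nonneg fun t => hsq t ▸ sq_nonneg _
    _ = _ := by
        rw [integral_finsetSum _ fun j _ => ((hint _).div_const _).const_mul _]
        simp only [integral_const_mul, integral_div]

lemma sqrt_two_atom_moment {a b x₀ x₁ : ℝ} (hb : 0 < b) (hx₁ : 0 < x₁) (n j : ℕ) :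
    √(a * x₀ ^ (2 * (n + j)) + b * x₁ ^ (2 * (n + j))) / x₁ ^ j
      = √b * x₁ ^ n * √(1 + a / b * ((x₀ / x₁) ^ 2) ^ n * ((x₀ / x₁) ^ 2) ^ j) := by
  have : a * x₀ ^ (2 * (n + j)) + b * x₁ ^ (2 * (n + j))
      = (x₁ ^ (n + j)) ^ 2 * (b * (1 + a / b * ((x₀ / x₁) ^ 2) ^ n * ((x₀ / x₁) ^ 2) ^ j)) := by
    simp only [div_pow, ← pow_mul]
    field_simp
    ring
  rw [this, Real.sqrt_mul (sq_nonneg _), Real.sqrt_sq (by positivity), Real.sqrt_mul hb.le]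
  field_simp
  ring

theorem not_forall_sq_integral_pow_eq (ν : Measure ℝ) {a b x₀ x₁ : ℝ} (ha : 0 < a) (hb : 0 < b)
    (hx₀ : 0 < x₀) (hx₀₁ : x₀ < x₁) :
    ¬ ∀ k : ℕ, (∫ t, t ^ (2 * k) ∂ν) ^ 2 = a * x₀ ^ (2 * k) + b * x₁ ^ (2 * k) := by
  intro hsq
  have hx₁ : 0 < x₁ := hx₀.trans hx₀₁
  set Q := (x₀ / x₁) ^ 2
  have hQ0 : 0 < Q := by positivity
  have hQ1 : Q < 1 := pow_lt_one₀ (by positivity) ((div_lt_one hx₁).2 hx₀₁) two_ne_zero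
  have hD : 0 < ((Q ^ 2 - 1) * (Q ^ 2 - Q)) ^ 2 / 8 := by
    have : Q ^ 2 < Q := by nlinarith
    have : 0 < (Q ^ 2 - 1) * (Q ^ 2 - Q) := mul_pos_of_neg_of_neg (by nlinarith) (by linarith)
    positivity
  obtain ⟨n, hn⟩ := exists_pow_lt_of_lt_one (div_pos hD (div_pos ha hb)) hQ1
  have hx : a / b * Q ^ n < ((Q ^ 2 - 1) * (Q ^ 2 - Q)) ^ 2 / 8 := by
    rwa [lt_div_iff₀ (div_pos ha hb), mul_comm] at hn
  have hmoment : ∀ k, ∫ t, t ^ (2 * k) ∂ν = √(a * x₀ ^ (2 * k) + b * x₁ ^ (2 * k)) := fun k => by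
    rw [← hsq, Real.sqrt_sq (integral_nonneg fun t => (even_two_mul k).pow_nonneg t)]
  have hint : ∀ k : ℕ, Integrable (fun t : ℝ => t ^ (2 * k)) ν := fun k => by
    -- otherwise the integral would be the junk value `0`
    by_contra hk
    have := hsq k
    rw [integral_undef hk] at this
    nlinarith [mul_pos ha (pow_pos hx₀ (2 * k)), mul_pos hb (pow_pos hx₁ (2 * k))]
  have hnonneg := sum_certCoeff_mul_integral_nonneg ν hint Q x₁ n
  simp only [hmoment, sqrt_two_atom_moment hb hx₁, mul_left_comm (certCoeff Q _),
    ← Finset.mul_sum] at hnonneg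
  exact (sum_certCoeff_mul_sqrt_neg hQ0 hQ1 (by positivity) hx).not_ge
    (nonneg_of_mul_nonneg_right hnonneg (by positivity))

theorem two_atomic_has_no_square_root_general
    (x₀ x₁ : ℝ) (h0 : 0 < x₀) (h01 : x₀ < x₁)
    (ρ₀ ρ₁ : ℝ≥0∞) (hρ₀ : 0 < ρ₀) (hρ₁ : 0 < ρ₁)
    (μ : Measure ℝ) (hμ : μ = ρ₀ • Measure.dirac x₀ + ρ₁ • Measure.dirac x₁)
    [IsProbabilityMeasure μ] :
    ¬ ∃ ν : Measure ℝ, ν (Iio (0:ℝ)) = 0 ∧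
        ∀ n : ℕ, (∫ t, t ^ n ∂μ) = (∫ t, t ^ n ∂ν) ^ 2 := by
  rintro ⟨ν, -, hmoment⟩
  have hmass : ρ₀ + ρ₁ = 1 := by simpa [hμ] using measure_univ (μ := μ)
  obtain ⟨hρ₀_fin, hρ₁_fin⟩ : ρ₀ ≠ ∞ ∧ ρ₁ ≠ ∞ := add_ne_top.1 (hmass ▸ one_ne_top)
  refine not_forall_sq_integral_pow_eq ν (toReal_pos hρ₀.ne' hρ₀_fin)
    (toReal_pos hρ₁.ne' hρ₁_fin) h0 h01 fun k => ?_
  rw [← hmoment, hμ, integral_smul_dirac_add_smul_dirac hρ₀_fin hρ₁_fin, smul_eq_mul,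
    smul_eq_mul]

/-- A two-atomic probability measure `μ = ρ₀ δ_{x₀} + ρ₁ δ_{x₁}` on `[0,1]` with both
atoms strictly positive has no square root measure on `[0,∞)` in the
moment-matching sense. -/
theorem two_atomic_has_no_square_root
    (x₀ x₁ : ℝ) (h0 : 0 < x₀) (h01 : x₀ < x₁) (h1 : x₁ ≤ 1)
    (ρ₀ ρ₁ : ℝ≥0∞) (hρ₀ : 0 < ρ₀) (hρ₁ : 0 < ρ₁)
    (μ : Measure ℝ) (hμ : μ = ρ₀ • Measure.dirac x₀ + ρ₁ • Measure.dirac x₁)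
    [IsProbabilityMeasure μ] :
    ¬ ∃ ν : Measure ℝ, ν (Iio (0:ℝ)) = 0 ∧
        ∀ n : ℕ, (∫ t, t ^ n ∂μ) = (∫ t, t ^ n ∂ν) ^ 2 :=
  two_atomic_has_no_square_root_general x₀ x₁ h0 h01 ρ₀ ρ₁ hρ₀ hρ₁ μ hμ
end

section
/- Let g(x) = Σ_{i=0}^n a_i x^i be a polynomial, nonnegative on [0,1]. Then for every a ∈ (0,1), ∫_a^1 g(a/x) g(x) (1/x) dx = Σ_{i=0}^{n-1} ((1-a^{i+1})/(i+1)) Σ_{j=0}^{n-i-1} a_j a_{j+i+1} a^j - (ln a) Σ_{i=0}^n a_i² a^i + Σ_{i=-n-1}^{-2} ((1-a^{i+1})/(i+1)) Σ_{j=-i-1}^n a_j a_{j+i+1} a^j. -/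
/-!
Expanding `g`, the integrand becomes `∑ᵢ ∑ⱼ cᵢ cⱼ aⁱ x^(j-i-1)`. Over `[a, 1]` the monomial
`x^(j-i-1)` integrates to `(1 - a^(j-i)) / (j-i)` when `i ≠ j` and to `-log a` when `i = j`;
grouping the pairs `(i, j)` according to the sign of `j - i` yields the three sums.
-/

open MeasureTheory Set Finset intervalIntegral

lemma sum_range_sum_range_eq_above_add_diag_add_below {M : Type*} [AddCommMonoid M] (n : ℕ)
    (F : ℕ → ℕ → M) :
    ∑ i ∈ range (n + 1), ∑ j ∈ range (n + 1), F i j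
      = (∑ d ∈ range n, ∑ j ∈ range (n - d), F j (j + d + 1))
        + (∑ i ∈ range (n + 1), F i i)
        + ∑ k ∈ Icc 2 (n + 1), ∑ j ∈ Icc (k - 1) n, F j (j + 1 - k) := by
  have split_row (i : ℕ) (hi : i ∈ range (n + 1)) : ∑ j ∈ range (n + 1), F i j
      = (∑ t ∈ range (n - i), F i (i + t + 1)) + F i i + ∑ j ∈ range i, F i j := by
    rw [show n + 1 = i + 1 + (n - i) by grind, sum_range_add, sum_range_succ]
    simp only [add_right_comm i 1]
    abel
  have above : ∑ i ∈ range (n + 1), ∑ t ∈ range (n - i), F i (i + t + 1)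
      = ∑ d ∈ range n, ∑ j ∈ range (n - d), F j (j + d + 1) :=
    sum_comm' (by grind) |>.trans (sum_congr rfl fun d _ => sum_congr rfl fun j _ => by
      rw [add_right_comm])
  have below : ∑ i ∈ range (n + 1), ∑ j ∈ range i, F i j
      = ∑ k ∈ Icc 2 (n + 1), ∑ j ∈ Icc (k - 1) n, F j (j + 1 - k) := by
    rw [sum_sigma', sum_sigma']
    refine sum_nbij' (fun p => ⟨p.1 + 1 - p.2, p.1⟩) (fun p => ⟨p.2, p.2 + 1 - p.1⟩)
      ?_ ?_ ?_ ?_ ?_ <;> rintro ⟨i, j⟩ <;>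
      simp only [Finset.mem_sigma, Finset.mem_range, Finset.mem_Icc, Sigma.mk.injEq, heq_eq_eq,
        true_and, and_true]
    all_goals first | omega | exact fun _ => congrArg (F i) (by omega)
  rw [sum_congr rfl split_row, sum_add_distrib, sum_add_distrib, above, below]

lemma sum_mul_div_pow_mul_sum_mul_pow_mul_inv {x : ℝ} (hx : x ≠ 0) (a : ℝ) (s : Finset ℕ)
    (c : ℕ → ℝ) :
    (∑ i ∈ s, c i * (a / x) ^ i) * (∑ j ∈ s, c j * x ^ j) * (1 / x)
      = ∑ i ∈ s, ∑ j ∈ s, c i * c j * a ^ i * x ^ ((j : ℤ) - i - 1) := by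
  rw [sum_mul, sum_mul]
  refine sum_congr rfl fun i _ => ?_
  rw [mul_sum, sum_mul]
  refine sum_congr rfl fun j _ => ?_
  rw [zpow_sub₀ hx, zpow_sub₀ hx, zpow_one, zpow_natCast, zpow_natCast, div_pow]
  field_simp

lemma setIntegral_Ioo_eq_sum_sum_integral_zpow {a : ℝ} (ha : 0 < a) (ha1 : a ≤ 1)
    (s : Finset ℕ) (c : ℕ → ℝ) :
    ∫ x in Ioo a 1, (∑ i ∈ s, c i * (a / x) ^ i) * (∑ j ∈ s, c j * x ^ j) * (1 / x)
      = ∑ i ∈ s, ∑ j ∈ s, c i * c j * a ^ i * ∫ x in a..1, x ^ ((j : ℤ) - i - 1) := by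
  have hint (i j : ℕ) :
      IntervalIntegrable (fun x : ℝ => c i * c j * a ^ i * x ^ ((j : ℤ) - i - 1)) volume a 1 :=
    (intervalIntegrable_zpow (Or.inr (notMem_uIcc_of_lt ha one_pos))).const_mul _
  rw [← integral_Ioc_eq_integral_Ioo, ← integral_of_le ha1]
  rw [integral_congr fun x hx => sum_mul_div_pow_mul_sum_mul_pow_mul_inv
    (ne_of_gt (ha.trans_le (uIcc_of_le ha1 ▸ hx).1)) a s c]
  rw [intervalIntegral.integral_finsetSum fun i _ => by
    rw [← sum_fn]; exact .sum s fun j _ => hint i j]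
  refine sum_congr rfl fun i _ => ?_
  rw [intervalIntegral.integral_finsetSum fun j _ => hint i j]
  exact sum_congr rfl fun j _ => integral_const_mul _ _

theorem square_of_polynomial_measure_general
    (n : ℕ) (c : ℕ → ℝ) (g : ℝ → ℝ)
    (hg : ∀ x, g x = ∑ i ∈ range (n + 1), c i * x ^ i)
    (a : ℝ) (ha : a ∈ Ioo (0:ℝ) 1) :
    (∫ x in Ioo a 1, g (a / x) * g x * (1 / x)) =
      (∑ i ∈ range n, ((1 - a ^ (i + 1)) / ((i : ℝ) + 1)) *
          ∑ j ∈ range (n - i), c j * c (j + i + 1) * a ^ j)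
        - Real.log a * ∑ i ∈ range (n + 1), (c i) ^ 2 * a ^ i
        + ∑ k ∈ Icc 2 (n + 1), ((1 - a ^ ((1 : ℤ) - (k : ℤ))) / (1 - (k : ℝ))) *
            ∑ j ∈ Icc (k - 1) n, c j * c (j + 1 - k) * a ^ j := by
  obtain ⟨ha0, ha1⟩ := ha
  set F : ℕ → ℕ → ℝ := fun i j => c i * c j * a ^ i * ∫ x in a..1, x ^ ((j : ℤ) - i - 1)
  have above (d j : ℕ) :
      F j (j + d + 1) = (1 - a ^ (d + 1)) / ((d : ℝ) + 1) * (c j * c (j + d + 1) * a ^ j) := by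
    simp only [F, show ((j + d + 1 : ℕ) : ℤ) - j - 1 = d by push_cast; ring, zpow_natCast,
      integral_pow, one_pow]
    ring
  have diag (i : ℕ) : F i i = -(Real.log a * (c i ^ 2 * a ^ i)) := by
    simp only [F, show (i : ℤ) - i - 1 = -1 by ring, zpow_neg_one,
      integral_inv_of_pos ha0 one_pos, one_div, Real.log_inv]
    ring
  have below (k j : ℕ) (hk : 2 ≤ k) (hj : k - 1 ≤ j) : F j (j + 1 - k)
      = (1 - a ^ ((1 : ℤ) - k)) / (1 - (k : ℝ)) * (c j * c (j + 1 - k) * a ^ j) := by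
    simp only [F, show ((j + 1 - k : ℕ) : ℤ) - j - 1 = -k by omega,
      integral_zpow (Or.inr ⟨show -(k : ℤ) ≠ -1 by omega, notMem_uIcc_of_lt ha0 one_pos⟩),
      one_zpow, neg_add_eq_sub]
    push_cast
    ring
  simp only [hg]
  rw [setIntegral_Ioo_eq_sum_sum_integral_zpow ha0 ha1.le,
    sum_range_sum_range_eq_above_add_diag_add_below n F, sub_eq_add_neg, mul_sum,
    ← sum_neg_distrib]
  simp only [mul_sum, above, diag]
  congr 1
  exact sum_congr rfl fun k hk => sum_congr rfl fun j hj =>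
    below k j (Finset.mem_Icc.1 hk).1 (Finset.mem_Icc.1 hj).1

/-- The explicit formula for the multiplicative self-convolution of a polynomial
density `g(x) = Σ_{i=0}^n c_i x^i` on `(0,1)` (the density of the square of the
measure `g(t) dt`). The third sum of the paper, indexed by `i = -n-1, …, -2`, is
re-indexed here by `k = -i ∈ {2, …, n+1}`. -/
theorem square_of_polynomial_measure
    (n : ℕ) (c : ℕ → ℝ) (g : ℝ → ℝ)
    (hg : ∀ x, g x = ∑ i ∈ range (n + 1), c i * x ^ i)
    (hg_nonneg : ∀ x ∈ Icc (0:ℝ) 1, 0 ≤ g x)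
    (a : ℝ) (ha : a ∈ Ioo (0:ℝ) 1) :
    (∫ x in Ioo a 1, g (a / x) * g x * (1 / x)) =
      (∑ i ∈ range n, ((1 - a ^ (i + 1)) / ((i : ℝ) + 1)) *
          ∑ j ∈ range (n - i), c j * c (j + i + 1) * a ^ j)
        - Real.log a * ∑ i ∈ range (n + 1), (c i) ^ 2 * a ^ i
        + ∑ k ∈ Icc 2 (n + 1), ((1 - a ^ ((1 : ℤ) - (k : ℤ))) / (1 - (k : ℝ))) *
            ∑ j ∈ Icc (k - 1) n, c j * c (j + 1 - k) * a ^ j :=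
  square_of_polynomial_measure_general n c g hg a ha
end

section
/- Let W_α and W_β be unilateral weighted shifts with positive weight sequences α and β, and let W_{αβ} be the shift with weights α_n β_n. If W_α and W_β are both k-hyponormal for some k, then W_{αβ} is k-hyponormal. In terms of moments: if for all m the (k+1)×(k+1) Hankel matrices (γ_{m+i+j})_{0≤i,j≤k} and (γ'_{m+i+j})_{0≤i,j≤k} are positive semidefinite, then so are the Hankel matrices of the product sequence (γ_m γ'_m). -/
open MeasureTheory Finset Matrix

theorem schur_product_k_hyponormal_general
    (k : ℕ)
    (γ γ' : ℕ → ℝ)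
    (hHα : ∀ m : ℕ, (Matrix.of fun i j : Fin (k + 1) =>
      γ (m + (i : ℕ) + (j : ℕ))).PosSemidef)
    (hHβ : ∀ m : ℕ, (Matrix.of fun i j : Fin (k + 1) =>
      γ' (m + (i : ℕ) + (j : ℕ))).PosSemidef) :
    ∀ m : ℕ, (Matrix.of fun i j : Fin (k + 1) =>
      γ (m + (i : ℕ) + (j : ℕ)) * γ' (m + (i : ℕ) + (j : ℕ))).PosSemidef :=
  fun m => (hHα m).hadamard (hHβ m)

/-- The Schur product of two `k`-hyponormal weighted shifts is `k`-hyponormal, in terms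
of moments: if all the `(k+1)×(k+1)` Hankel moment matrices of the shifts `W_α` and
`W_β` are positive semidefinite, then so are those of the product shift `W_{αβ}`,
whose moment sequence is the entrywise product of the two moment sequences. -/
theorem schur_product_k_hyponormal
    (k : ℕ) (α β : ℕ → ℝ) (hα : ∀ i, 0 < α i) (hβ : ∀ i, 0 < β i)
    (γ γ' : ℕ → ℝ)
    (hγ : ∀ m, γ m = ∏ i ∈ range m, (α i) ^ 2)
    (hγ' : ∀ m, γ' m = ∏ i ∈ range m, (β i) ^ 2)
    (hHα : ∀ m : ℕ, (Matrix.of fun i j : Fin (k + 1) =>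
      γ (m + (i : ℕ) + (j : ℕ))).PosSemidef)
    (hHβ : ∀ m : ℕ, (Matrix.of fun i j : Fin (k + 1) =>
      γ' (m + (i : ℕ) + (j : ℕ))).PosSemidef) :
    ∀ m : ℕ, (Matrix.of fun i j : Fin (k + 1) =>
      γ (m + (i : ℕ) + (j : ℕ)) * γ' (m + (i : ℕ) + (j : ℕ))).PosSemidef :=
  schur_product_k_hyponormal_general k γ γ' hHα hHβ
end

section
/- Let ρ_n = (1/2)^{n+1} and let φ_n be the Taylor coefficients of 1/√(2-z) at z=0, i.e. φ_n satisfies Σ φ_n z^n = (2-z)^{-1/2}. Then ρ_n = Σ_{i+j=n} φ_i φ_j for all n, and all φ_n are positive. Hence for any 0 < r < 1, the probability measure μ = Σ (1/2)^{n+1} δ_{r^n} has square root ν = Σ φ_n δ_{r^n}: ∫ t^k dμ = (∫ t^k dν)^2 for all k. -/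
open MeasureTheory Set Finset ENNReal Real

private noncomputable def Cb (n : ℕ) : ℝ := (Nat.centralBinom n : ℝ)

private lemma Cb_pos (n : ℕ) : 0 < Cb n := by
  unfold Cb; exact_mod_cast Nat.centralBinom_pos n

private lemma Cb_zero : Cb 0 = 1 := by
  simp [Cb, Nat.centralBinom_zero]

private lemma Cb_rec (n : ℕ) : ((n : ℝ) + 1) * Cb (n + 1) = (4 * n + 2) * Cb n := by
  have h := Nat.succ_mul_centralBinom_succ n
  have h' := congrArg (fun m : ℕ => (m : ℝ)) h
  push_cast at h'
  unfold Cb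
  linarith

private lemma Cb_step (n : ℕ) : Cb (n + 1) ≤ 4 * Cb n := by
  have h := Cb_rec n
  have hn : (0 : ℝ) < (n : ℝ) + 1 := by positivity
  have hC := (Cb_pos n).le
  nlinarith

private lemma Cb_le (n : ℕ) : Cb n ≤ 4 ^ n := by
  induction n with
  | zero => simp [Cb_zero]
  | succ n ih =>
    calc Cb (n + 1) ≤ 4 * Cb n := Cb_step n
    _ ≤ 4 * 4 ^ n := by linarith
    _ = 4 ^ (n + 1) := by ring

private noncomputable def Sconv (n : ℕ) : ℝ := ∑ p ∈ range (n + 1), Cb p * Cb (n - p)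

private lemma conv_helper (n : ℕ) (w : ℕ → ℝ) (c : ℝ)
    (hw : ∀ p, p ≤ n → w p + w (n - p) = c) :
    ∑ p ∈ range (n + 1), w p * (Cb p * Cb (n - p)) = c / 2 * Sconv n := by
  have hrefl : ∑ p ∈ range (n + 1), w p * (Cb p * Cb (n - p))
      = ∑ p ∈ range (n + 1), w (n - p) * (Cb p * Cb (n - p)) := by
    rw [← Finset.sum_range_reflect (fun p => w (n - p) * (Cb p * Cb (n - p))) (n + 1)]
    refine Finset.sum_congr rfl fun p hp => ?_
    rw [Finset.mem_range, Nat.lt_succ_iff] at hp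
    have h1 : n + 1 - 1 - p = n - p := by omega
    have h2 : n - (n - p) = p := Nat.sub_sub_self hp
    simp only [h1, h2]
    ring
  have key : 2 * ∑ p ∈ range (n + 1), w p * (Cb p * Cb (n - p)) = c * Sconv n := by
    have step1 : 2 * ∑ p ∈ range (n + 1), w p * (Cb p * Cb (n - p))
        = ∑ p ∈ range (n + 1), (w p + w (n - p)) * (Cb p * Cb (n - p)) := by
      rw [Finset.sum_congr rfl (fun p (_ : p ∈ range (n + 1)) =>
        (by ring : (w p + w (n - p)) * (Cb p * Cb (n - p))
          = w p * (Cb p * Cb (n - p)) + w (n - p) * (Cb p * Cb (n - p)))),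
        Finset.sum_add_distrib, ← hrefl]
      ring
    rw [step1, Sconv, Finset.mul_sum]
    refine Finset.sum_congr rfl fun p hp => ?_
    rw [Finset.mem_range, Nat.lt_succ_iff] at hp
    rw [hw p hp]
  linarith

private lemma Sconv_succ (n : ℕ) : Sconv (n + 1) = 4 * Sconv n := by
  have hA : ∑ p ∈ range (n + 1), ((p : ℝ) + 1 / 2) * (Cb p * Cb (n - p))
      = ((n : ℝ) + 1) / 2 * Sconv n := by
    refine conv_helper n _ _ fun p hp => ?_
    have : ((n - p : ℕ) : ℝ) = (n : ℝ) - p := by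
      rw [Nat.cast_sub hp]
    rw [this]; ring
  have hB : ∑ q ∈ range (n + 2), (q : ℝ) * (Cb q * Cb (n + 1 - q))
      = ((n : ℝ) + 1) / 2 * Sconv (n + 1) := by
    have := conv_helper (n + 1) (fun q => (q : ℝ)) ((n : ℝ) + 1) (fun p hp => by
      have : ((n + 1 - p : ℕ) : ℝ) = (n : ℝ) + 1 - p := by
        rw [Nat.cast_sub hp]; push_cast; ring
      simp only [this]; ring)
    simpa using this
  -- rewrite the A-sum using the recurrence
  have hshift : ∑ p ∈ range (n + 1), ((p : ℝ) + 1 / 2) * (Cb p * Cb (n - p))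
      = 1 / 4 * ∑ q ∈ range (n + 2), (q : ℝ) * (Cb q * Cb (n + 1 - q)) := by
    have h1 : ∀ p : ℕ, ((p : ℝ) + 1 / 2) * Cb p = 1 / 4 * (((p : ℝ) + 1) * Cb (p + 1)) := by
      intro p
      have := Cb_rec p
      linarith
    have h2 := Finset.sum_range_succ' (fun q => (q : ℝ) * (Cb q * Cb (n + 1 - q))) (n + 1)
    rw [h2]
    simp only [Nat.cast_zero, zero_mul, add_zero, Nat.cast_ofNat]
    rw [Finset.mul_sum]
    refine Finset.sum_congr rfl fun p _ => ?_
    have h3 : n + 1 - (p + 1) = n - p := by omega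
    rw [h3]
    have h4 := h1 p
    push_cast
    linear_combination Cb (n - p) * h4
  have hn : (0 : ℝ) < (n : ℝ) + 1 := by positivity
  rw [hshift, hB] at hA
  have hne : ((n : ℝ) + 1) ≠ 0 := hn.ne'
  have h' : ((n : ℝ) + 1) * Sconv (n + 1) = ((n : ℝ) + 1) * (4 * Sconv n) := by
    linear_combination 8 * hA
  exact mul_left_cancel₀ hne h'


private lemma Sconv_eq (n : ℕ) : Sconv n = 4 ^ n := by
  induction n with
  | zero => simp [Sconv, Cb_zero]
  | succ n ih => rw [Sconv_succ, ih]; ring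

private lemma geom_half (z : ℝ) (hz : |z| < 2) :
    ∑' n : ℕ, ((1 : ℝ) / 2) ^ (n + 1) * z ^ n = (2 - z)⁻¹ := by
  have hz2 : ‖z / 2‖ < 1 := by
    rw [Real.norm_eq_abs, abs_div, abs_two]
    linarith [abs_nonneg z]
  have h1 : ∀ n : ℕ, ((1 : ℝ) / 2) ^ (n + 1) * z ^ n = (1 / 2) * (z / 2) ^ n := by
    intro n
    rw [div_pow, div_pow, one_pow, pow_succ]
    field_simp
  simp_rw [h1]
  rw [tsum_mul_left, tsum_geometric_of_norm_lt_one hz2]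
  have h2 : (2 : ℝ) - z ≠ 0 := by
    have := abs_lt.mp hz
    linarith [this.2]
  have h3 : (1 : ℝ) - z / 2 ≠ 0 := by
    intro h
    apply h2
    linarith [h]
  field_simp
  try ring

set_option maxHeartbeats 1000000 in
/-- The geometric distribution `ρ_n = (1/2)^{n+1}`, with generating function `1/(2-z)`,
has square root given by the Taylor coefficients `φ_n = (1/√2)·C(2n,n)/8^n` of
`(2-z)^{-1/2}`: the `φ_n` are positive, `Σ φ_n z^n = (2-z)^{-1/2}`,
`ρ_n = Σ_{i+j=n} φ_i φ_j`, and for every `0 < r < 1` the measure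
`μ = Σ (1/2)^{n+1} δ_{r^n}` has square root `ν = Σ φ_n δ_{r^n}` in the
moment-matching sense. -/
theorem geometric_distribution_square_root
    (φ : ℕ → ℝ)
    (hφdef : ∀ n, φ n = (1 / Real.sqrt 2) * ((2 * n).choose n : ℝ) / 8 ^ n) :
    (∀ n, 0 < φ n) ∧
    (∀ z : ℝ, |z| < 2 → ∑' n : ℕ, φ n * z ^ n = (2 - z) ^ (-(1/2) : ℝ)) ∧
    (∀ n : ℕ, ((1:ℝ)/2) ^ (n + 1) = ∑ p ∈ range (n + 1), φ p * φ (n - p)) ∧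
    ∀ r : ℝ, 0 < r → r < 1 →
      ∀ μ ν : Measure ℝ,
        μ = (Measure.sum fun n => ENNReal.ofReal (((1:ℝ)/2) ^ (n + 1)) •
              Measure.dirac (r ^ n)) →
        ν = (Measure.sum fun n => ENNReal.ofReal (φ n) • Measure.dirac (r ^ n)) →
        ∀ k : ℕ, (∫ t, t ^ k ∂μ) = (∫ t, t ^ k ∂ν) ^ 2 := by
  have hsqrt2 : (0 : ℝ) < Real.sqrt 2 := Real.sqrt_pos.mpr (by norm_num)
  have hφC : ∀ n, φ n = (1 / Real.sqrt 2) * Cb n / 8 ^ n := by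
    intro n
    rw [hφdef n]
    unfold Cb Nat.centralBinom
    rfl
  -- positivity
  have hpos : ∀ n, 0 < φ n := by
    intro n
    rw [hφC n]
    have := Cb_pos n
    positivity
  -- bound φ n ≤ (1/√2) (1/2)^n
  have hφbound : ∀ n, φ n ≤ (1 / Real.sqrt 2) * (1 / 2) ^ n := by
    intro n
    rw [hφC n]
    have h4 : Cb n ≤ 4 ^ n := Cb_le n
    have h8 : (0 : ℝ) < (8 : ℝ) ^ n := by positivity
    have hs : (0 : ℝ) < 1 / Real.sqrt 2 := by positivity
    calc (1 / Real.sqrt 2) * Cb n / 8 ^ n ≤ (1 / Real.sqrt 2) * 4 ^ n / 8 ^ n := by gcongr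
    _ = (1 / Real.sqrt 2) * (1 / 2) ^ n := by
        rw [mul_div_assoc, ← div_pow]
        norm_num
  -- φ (n+1) ≤ φ n / 2
  have hφhalf : ∀ n, φ (n + 1) ≤ φ n / 2 := by
    intro n
    rw [hφC n, hφC (n + 1)]
    have hstep := Cb_step n
    have hs : (0 : ℝ) ≤ 1 / Real.sqrt 2 := by positivity
    calc (1 / Real.sqrt 2) * Cb (n + 1) / 8 ^ (n + 1)
        ≤ (1 / Real.sqrt 2) * (4 * Cb n) / 8 ^ (n + 1) := by gcongr
    _ = (1 / Real.sqrt 2) * Cb n / 8 ^ n / 2 := by rw [pow_succ]; ring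
  -- convolution identity (part 3)
  have hconv : ∀ n : ℕ, ((1:ℝ)/2) ^ (n + 1) = ∑ p ∈ range (n + 1), φ p * φ (n - p) := by
    intro n
    have hterm : ∀ p ∈ range (n + 1),
        φ p * φ (n - p) = (1 / 2) / 8 ^ n * (Cb p * Cb (n - p)) := by
      intro p hp
      rw [Finset.mem_range, Nat.lt_succ_iff] at hp
      rw [hφC p, hφC (n - p)]
      have h8 : (8 : ℝ) ^ p * 8 ^ (n - p) = 8 ^ n := by
        rw [← pow_add, Nat.add_sub_cancel' hp]
      have hss : (1 / Real.sqrt 2) * (1 / Real.sqrt 2) = 1 / 2 := by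
        rw [div_mul_div_comm, one_mul, Real.mul_self_sqrt (by norm_num : (0:ℝ) ≤ 2)]
      calc (1 / Real.sqrt 2) * Cb p / 8 ^ p * ((1 / Real.sqrt 2) * Cb (n - p) / 8 ^ (n - p))
          = (1 / Real.sqrt 2 * (1 / Real.sqrt 2)) * (Cb p * Cb (n - p))
            / (8 ^ p * 8 ^ (n - p)) := by ring
      _ = (1 / 2) / 8 ^ n * (Cb p * Cb (n - p)) := by rw [hss, h8]; ring
    rw [Finset.sum_congr rfl hterm, ← Finset.mul_sum]
    have hS : ∑ p ∈ range (n + 1), Cb p * Cb (n - p) = 4 ^ n := by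
      rw [← Sconv_eq n]; rfl
    rw [hS]
    have h28 : (8 : ℝ) ^ n = 2 ^ n * 4 ^ n := by
      rw [← mul_pow]; norm_num
    rw [h28, pow_succ]
    have h2n : ((2:ℝ) ^ n) ≠ 0 := by positivity
    have h4n : ((4:ℝ) ^ n) ≠ 0 := by positivity
    field_simp
    rw [← mul_pow]; norm_num
  -- summability
  have hsumnorm : ∀ z : ℝ, |z| < 2 → Summable fun n => ‖φ n * z ^ n‖ := by
    intro z hz
    have hg : Summable fun n : ℕ => (1 / Real.sqrt 2) * (|z| / 2) ^ n := by
      apply Summable.mul_left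
      apply summable_geometric_of_lt_one (by positivity)
      linarith
    apply Summable.of_nonneg_of_le (fun n => norm_nonneg _) _ hg
    intro n
    rw [norm_mul, Real.norm_eq_abs, Real.norm_eq_abs, abs_pow,
      abs_of_pos (hpos n), div_pow]
    have h2n : (0 : ℝ) < (2:ℝ) ^ n := by positivity
    calc φ n * |z| ^ n ≤ (1 / Real.sqrt 2) * (1 / 2) ^ n * |z| ^ n :=
          mul_le_mul_of_nonneg_right (hφbound n) (pow_nonneg (abs_nonneg z) n)
    _ = (1 / Real.sqrt 2) * (|z| ^ n / 2 ^ n) := by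
        rw [div_pow]; ring
  -- generating function (part 2)
  have hgen : ∀ z : ℝ, |z| < 2 → ∑' n : ℕ, φ n * z ^ n = (2 - z) ^ (-(1/2) : ℝ) := by
    intro z hz
    have hz2 : z < 2 := (abs_lt.mp hz).2
    have h2z : (0 : ℝ) < 2 - z := by linarith
    have hnorm := hsumnorm z hz
    have hsum : Summable fun n => φ n * z ^ n := hnorm.of_norm
    -- square of the sum
    have hsq : (∑' n : ℕ, φ n * z ^ n) * (∑' n : ℕ, φ n * z ^ n) = (2 - z)⁻¹ := by
      rw [tsum_mul_tsum_eq_tsum_sum_range_of_summable_norm hnorm hnorm]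
      have hterm : ∀ n : ℕ,
          (∑ p ∈ range (n + 1), (φ p * z ^ p) * (φ (n - p) * z ^ (n - p)))
            = ((1:ℝ)/2) ^ (n + 1) * z ^ n := by
        intro n
        rw [hconv n, Finset.sum_mul]
        refine Finset.sum_congr rfl fun p hp => ?_
        rw [Finset.mem_range, Nat.lt_succ_iff] at hp
        rw [show φ p * z ^ p * (φ (n - p) * z ^ (n - p))
            = φ p * φ (n - p) * (z ^ p * z ^ (n - p)) by ring,
          ← pow_add, Nat.add_sub_cancel' hp]
      simp_rw [hterm]
      exact geom_half z hz
    -- positivity of the sum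
    have hfpos : 0 < ∑' n : ℕ, φ n * z ^ n := by
      have hinj1 : Function.Injective (fun k : ℕ => 2 * k) := fun a b h => by
        simp only at h; omega
      have hinj2 : Function.Injective (fun k : ℕ => 2 * k + 1) := fun a b h => by
        simp only at h; omega
      have he : Summable fun k : ℕ => φ (2 * k) * z ^ (2 * k) :=
        hsum.comp_injective hinj1
      have ho : Summable fun k : ℕ => φ (2 * k + 1) * z ^ (2 * k + 1) :=
        hsum.comp_injective hinj2
      have heo := tsum_even_add_odd (f := fun n => φ n * z ^ n) he ho
      have hfeq : (∑' n : ℕ, φ n * z ^ n)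
          = ∑' k : ℕ, (φ (2 * k) * z ^ (2 * k) + φ (2 * k + 1) * z ^ (2 * k + 1)) :=
        heo.symm.trans (Summable.tsum_add he ho).symm
      rw [hfeq]
      have hgnonneg : ∀ k : ℕ,
          0 ≤ φ (2 * k) * z ^ (2 * k) + φ (2 * k + 1) * z ^ (2 * k + 1) := by
        intro k
        have h1 : φ (2 * k + 1) ≤ φ (2 * k) / 2 := hφhalf (2 * k)
        have h2 : 0 < φ (2 * k) := hpos (2 * k)
        have h3 : 0 < φ (2 * k + 1) := hpos (2 * k + 1)
        have habs : -|z| ≤ z := neg_abs_le z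
        have hzabs : |z| < 2 := hz
        have hzn : (0 : ℝ) ≤ z ^ (2 * k) := by
          rw [pow_mul]
          positivity
        have key : 0 ≤ φ (2 * k) + φ (2 * k + 1) * z := by nlinarith [abs_nonneg z]
        have : φ (2 * k) * z ^ (2 * k) + φ (2 * k + 1) * z ^ (2 * k + 1)
            = z ^ (2 * k) * (φ (2 * k) + φ (2 * k + 1) * z) := by ring
        rw [this]
        exact mul_nonneg hzn key
      have hg0 : 0 < φ (2 * 0) * z ^ (2 * 0) + φ (2 * 0 + 1) * z ^ (2 * 0 + 1) := by
        simp only [Nat.mul_zero, pow_zero, mul_one, Nat.zero_add, pow_one]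
        have h1 : φ 1 ≤ φ 0 / 2 := hφhalf 0
        have h2 : 0 < φ 0 := hpos 0
        have h3 : 0 < φ 1 := hpos 1
        have habs : -|z| ≤ z := neg_abs_le z
        nlinarith [abs_nonneg z]
      calc (0 : ℝ) < φ (2 * 0) * z ^ (2 * 0) + φ (2 * 0 + 1) * z ^ (2 * 0 + 1) := hg0
      _ ≤ ∑' k : ℕ, (φ (2 * k) * z ^ (2 * k) + φ (2 * k + 1) * z ^ (2 * k + 1)) := by
          apply Summable.le_tsum (he.add ho) 0
          intro j _
          exact hgnonneg j
    -- conclude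
    have hval : (∑' n : ℕ, φ n * z ^ n) ^ 2 = (2 - z)⁻¹ := by
      rw [sq]; exact hsq
    have : ∑' n : ℕ, φ n * z ^ n = Real.sqrt ((2 - z)⁻¹) := by
      rw [← hval, Real.sqrt_sq hfpos.le]
    rw [this, Real.sqrt_inv, Real.sqrt_eq_rpow, Real.rpow_neg h2z.le]
  -- auxiliary integral computation
  have hint : ∀ (w : ℕ → ℝ), (∀ n, 0 ≤ w n) → Summable w →
      ∀ (r : ℝ), 0 < r → r ≤ 1 → ∀ k : ℕ,
      (∫ t, t ^ k ∂(Measure.sum fun n => ENNReal.ofReal (w n) • Measure.dirac (r ^ n)))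
        = ∑' n : ℕ, w n * (r ^ k) ^ n := by
    intro w hw hws r hr0 hr1 k
    have hintg : Integrable (fun t : ℝ => t ^ k)
        (Measure.sum fun n => ENNReal.ofReal (w n) • Measure.dirac (r ^ n)) := by
      refine ⟨(continuous_pow k).aestronglyMeasurable, ?_⟩
      have : (∫⁻ t, (‖t ^ k‖₊ : ℝ≥0∞)
          ∂(Measure.sum fun n => ENNReal.ofReal (w n) • Measure.dirac (r ^ n)))
          = ∑' n : ℕ, ENNReal.ofReal (w n) * (‖(r ^ n) ^ k‖₊ : ℝ≥0∞) := by
        rw [lintegral_sum_measure]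
        congr 1
        ext n
        rw [lintegral_smul_measure, lintegral_dirac, smul_eq_mul]
      rw [HasFiniteIntegral]; simp only [enorm_eq_nnnorm]; rw [this]
      calc ∑' n : ℕ, ENNReal.ofReal (w n) * (‖(r ^ n) ^ k‖₊ : ℝ≥0∞)
          ≤ ∑' n : ℕ, ENNReal.ofReal (w n) * 1 := by
            apply ENNReal.tsum_le_tsum
            intro n
            apply mul_le_mul_right
            rw [← ENNReal.coe_one, ENNReal.coe_le_coe, ← NNReal.coe_le_coe, coe_nnnorm,
              NNReal.coe_one, Real.norm_eq_abs]
            have h1 : (0:ℝ) < r ^ n := by positivity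
            have h2 : r ^ n ≤ 1 := pow_le_one₀ hr0.le hr1
            rw [abs_of_nonneg (by positivity)]
            exact pow_le_one₀ h1.le h2
      _ = ENNReal.ofReal (∑' n, w n) := by
            simp_rw [mul_one]
            rw [← ENNReal.ofReal_tsum_of_nonneg hw hws]
      _ < ⊤ := ENNReal.ofReal_lt_top
    rw [integral_sum_measure hintg]
    have : ∀ n : ℕ, (∫ t, t ^ k ∂(ENNReal.ofReal (w n) • Measure.dirac (r ^ n)))
        = w n * (r ^ k) ^ n := by
      intro n
      rw [integral_smul_measure, integral_dirac, smul_eq_mul,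
        ENNReal.toReal_ofReal (hw n), ← pow_mul, mul_comm n k, pow_mul]
    simp_rw [this]
  -- part 4
  refine ⟨hpos, hgen, hconv, ?_⟩
  intro r hr0 hr1 μ ν hμ hν k
  subst hμ hν
  set x := r ^ k with hx
  have hx0 : 0 < x := by positivity
  have hx1 : x ≤ 1 := pow_le_one₀ hr0.le hr1.le
  have hxabs : |x| < 2 := by rw [abs_of_pos hx0]; linarith
  have h2x : (0 : ℝ) < 2 - x := by linarith
  -- μ-side
  have hwsum : Summable fun n : ℕ => ((1:ℝ)/2) ^ (n + 1) := by
    apply Summable.congr (f := fun n : ℕ => (1/2) * ((1:ℝ)/2) ^ n)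
    · exact (summable_geometric_of_lt_one (by norm_num) (by norm_num)).mul_left _
    · intro n; rw [pow_succ]; ring
  have hμval : (∫ t, t ^ k
      ∂(Measure.sum fun n => ENNReal.ofReal (((1:ℝ)/2) ^ (n + 1)) • Measure.dirac (r ^ n)))
      = (2 - x)⁻¹ := by
    rw [hint _ (fun n => by positivity) hwsum r hr0 hr1.le k]
    exact geom_half x hxabs
  -- ν-side
  have hφsum : Summable φ := by
    apply Summable.of_nonneg_of_le (fun n => (hpos n).le) hφbound
    exact (summable_geometric_of_lt_one (by norm_num) (by norm_num)).mul_left _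
  have hνval : (∫ t, t ^ k
      ∂(Measure.sum fun n => ENNReal.ofReal (φ n) • Measure.dirac (r ^ n)))
      = (2 - x) ^ (-(1/2) : ℝ) := by
    rw [hint _ (fun n => (hpos n).le) hφsum r hr0 hr1.le k]
    exact hgen x hxabs
  rw [hμval, hνval]
  rw [← Real.rpow_natCast ((2 - x) ^ (-(1/2) : ℝ)) 2, ← Real.rpow_mul h2x.le]
  norm_num
  exact (Real.rpow_neg_one (2 - x)).symm
end
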